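/- arXiv:2308.11555 — 5 statements merged into one kernel-verified Lean document; each statement's English description precedes it below -/
import Mathlib

section
/- The Jacobi theta function θ(z) = θ₁(z|ω) with ω = e^{2πi/3} satisfies θ(z) = e^{-iπ/4} · conj(θ(conj(z))) for all z ∈ ℂ. -/
open Complex

/-- ω = e^{2πi/3} -/
noncomputable def omega : ℂ := Complex.exp (2 * (Real.pi : ℂ) * Complex.I / 3)

lemma conj_tprod (f : ℕ → ℂ) :
    (starRingEnd ℂ) (∏' n, f n) = ∏' n, (starRingEnd ℂ) (f n) := by
  by_cases h : Multipliable f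
  · exact h.map_tprod (starRingEnd ℂ) continuous_conj
  · have h2 : ¬ Multipliable (fun n => (starRingEnd ℂ) (f n)) := by
      intro h2
      apply h
      have h3 := h2.map (starRingEnd ℂ) continuous_conj
      have h4 : (⇑(starRingEnd ℂ) ∘ fun n => (starRingEnd ℂ) (f n)) = f := by
        ext n; simp
      rwa [h4] at h3
    rw [tprod_eq_one_of_not_multipliable h, tprod_eq_one_of_not_multipliable h2, map_one]

lemma omega_cube : omega ^ 3 = 1 := by
  rw [omega, ← Complex.exp_nat_mul]
  rw [show (3:ℕ) * (2 * (Real.pi:ℂ) * Complex.I / 3) = 2 * Real.pi * Complex.I by push_cast; ring]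
  exact Complex.exp_two_pi_mul_I

lemma omega_ne_one : omega ≠ 1 := by
  intro h
  rw [omega, Complex.exp_eq_one_iff] at h
  obtain ⟨n, hn⟩ := h
  have hne : (2 * (Real.pi:ℂ) * Complex.I) ≠ 0 := by
    simp [Real.pi_ne_zero, Complex.I_ne_zero]
  have h2 : (2*(Real.pi:ℂ)*Complex.I) * (1/3) = (2*(Real.pi:ℂ)*Complex.I) * n := by
    linear_combination hn
  have h3 : (1/3 : ℂ) = n := mul_left_cancel₀ hne h2
  have h4 : (3:ℂ) * n = 1 := by linear_combination (-3) * h3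
  have h5 : (3 * n : ℤ) = 1 := by exact_mod_cast h4
  omega

lemma conj_omega : (starRingEnd ℂ) omega = -1 - omega := by
  have hω0 : omega ≠ 0 := Complex.exp_ne_zero _
  have hinv : (starRingEnd ℂ) omega * omega = 1 := by
    rw [omega, ← Complex.exp_conj, ← Complex.exp_add]
    have hc : (starRingEnd ℂ) (2 * (Real.pi:ℂ) * Complex.I / 3) = 2 * Real.pi * -Complex.I / 3 := by
      simp [map_div₀, Complex.conj_I, Complex.conj_ofNat]
    rw [hc, show 2 * (Real.pi:ℂ) * -Complex.I / 3 + 2 * Real.pi * Complex.I / 3 = 0 by ring]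
    exact Complex.exp_zero
  have hsum0 : 1 + omega + omega^2 = 0 := by
    have hne : omega - 1 ≠ 0 := sub_ne_zero.mpr omega_ne_one
    have h : (omega - 1) * (1 + omega + omega^2) = 0 := by linear_combination omega_cube
    exact (mul_eq_zero.mp h).resolve_left hne
  have h2 : (-1 - omega) * omega = 1 := by linear_combination -hsum0
  exact mul_right_cancel₀ hω0 (hinv.trans h2.symm)

/-- q = e^{iπω} -/
noncomputable def qnome : ℂ := Complex.exp ((Real.pi : ℂ) * Complex.I * omega)

/-- q^{1/4} = e^{(1/4)πiω} -/
noncomputable def qnome4 : ℂ := Complex.exp ((Real.pi : ℂ) * Complex.I * omega / 4)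

lemma conj_qnome : (starRingEnd ℂ) qnome = -qnome := by
  rw [qnome, ← Complex.exp_conj, map_mul, map_mul, Complex.conj_ofReal, Complex.conj_I,
    conj_omega, show (Real.pi:ℂ) * -Complex.I * (-1 - omega)
      = Real.pi * Complex.I + Real.pi * Complex.I * omega by ring,
    Complex.exp_add, Complex.exp_pi_mul_I]
  ring

lemma conj_qnome4 : (starRingEnd ℂ) qnome4
    = Complex.exp ((Real.pi:ℂ) * Complex.I / 4) * qnome4 := by
  rw [qnome4, ← Complex.exp_conj, map_div₀, map_mul, map_mul, Complex.conj_ofReal,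
    Complex.conj_I, conj_omega, Complex.conj_ofNat,
    show (Real.pi:ℂ) * -Complex.I * (-1 - omega) / 4
      = Real.pi * Complex.I / 4 + Real.pi * Complex.I * omega / 4 by ring,
    Complex.exp_add]

lemma conj_qnome_pow (k : ℕ) :
    (starRingEnd ℂ) (qnome ^ (2 * (k + 1))) = qnome ^ (2 * (k + 1)) := by
  rw [map_pow, conj_qnome, Even.neg_pow ⟨k + 1, by ring⟩]


/-- The Jacobi theta function θ(z) = θ₁(z|ω), given by the product formula
    θ(z) = 2 q^{1/4} sin(πz) ∏_{n=1}^∞ (1-q^{2n})(1-q^{2n}e^{2πiz})(1-q^{2n}e^{-2πiz}). -/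
noncomputable def theta (z : ℂ) : ℂ :=
  2 * qnome4 * Complex.sin ((Real.pi : ℂ) * z) *
    ∏' n : ℕ,
      ((1 - qnome ^ (2 * (n + 1))) *
        (1 - qnome ^ (2 * (n + 1)) * Complex.exp (2 * (Real.pi : ℂ) * Complex.I * z)) *
        (1 - qnome ^ (2 * (n + 1)) * Complex.exp (-(2 * (Real.pi : ℂ) * Complex.I * z))))

/-- θ(z) = e^{-iπ/4} · conj(θ(conj z)) for all z ∈ ℂ. -/
theorem theta_conj_symm (z : ℂ) :
    theta z = Complex.exp (-((Real.pi : ℂ) * Complex.I / 4)) *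
      (starRingEnd ℂ) (theta ((starRingEnd ℂ) z)) := by
  have e1 : (starRingEnd ℂ) (Complex.exp (2*(Real.pi:ℂ)*Complex.I*((starRingEnd ℂ) z)))
      = Complex.exp (-(2*(Real.pi:ℂ)*Complex.I*z)) := by
    rw [← Complex.exp_conj]; congr 1
    rw [map_mul, map_mul, map_mul, Complex.conj_ofReal, Complex.conj_I, Complex.conj_conj,
      Complex.conj_ofNat]; ring
  have e2 : (starRingEnd ℂ) (Complex.exp (-(2*(Real.pi:ℂ)*Complex.I*((starRingEnd ℂ) z))))
      = Complex.exp (2*(Real.pi:ℂ)*Complex.I*z) := by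
    rw [← Complex.exp_conj]; congr 1
    rw [map_neg, map_mul, map_mul, map_mul, Complex.conj_ofReal, Complex.conj_I,
      Complex.conj_conj, Complex.conj_ofNat]; ring
  have hsin : (starRingEnd ℂ) (Complex.sin ((Real.pi:ℂ) * ((starRingEnd ℂ) z)))
      = Complex.sin ((Real.pi:ℂ) * z) := by
    rw [show (Real.pi:ℂ) * ((starRingEnd ℂ) z) = (starRingEnd ℂ) ((Real.pi:ℂ) * z) by
      rw [map_mul, Complex.conj_ofReal], Complex.sin_conj, Complex.conj_conj]
  have hfac : ∀ n : ℕ, (starRingEnd ℂ)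
      ((1 - qnome ^ (2 * (n + 1))) *
        (1 - qnome ^ (2 * (n + 1)) * Complex.exp (2 * (Real.pi : ℂ) * Complex.I * ((starRingEnd ℂ) z))) *
        (1 - qnome ^ (2 * (n + 1)) * Complex.exp (-(2 * (Real.pi : ℂ) * Complex.I * ((starRingEnd ℂ) z)))))
      = ((1 - qnome ^ (2 * (n + 1))) *
        (1 - qnome ^ (2 * (n + 1)) * Complex.exp (2 * (Real.pi : ℂ) * Complex.I * z)) *
        (1 - qnome ^ (2 * (n + 1)) * Complex.exp (-(2 * (Real.pi : ℂ) * Complex.I * z)))) := by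
    intro n
    rw [map_mul, map_mul, map_sub, map_sub, map_sub, map_one, map_mul, map_mul,
      conj_qnome_pow, e1, e2]
    ring
  conv_rhs => rw [theta]
  rw [map_mul, map_mul, map_mul, conj_tprod, tprod_congr hfac, hsin, conj_qnome4,
    Complex.conj_ofNat, theta]
  set P := ∏' n : ℕ,
      ((1 - qnome ^ (2 * (n + 1))) *
        (1 - qnome ^ (2 * (n + 1)) * Complex.exp (2 * (Real.pi : ℂ) * Complex.I * z)) *
        (1 - qnome ^ (2 * (n + 1)) * Complex.exp (-(2 * (Real.pi : ℂ) * Complex.I * z)))) with hP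
  have key : Complex.exp (-((Real.pi:ℂ)*Complex.I/4)) * Complex.exp ((Real.pi:ℂ)*Complex.I/4)
      = 1 := by rw [← Complex.exp_add, neg_add_cancel, Complex.exp_zero]
  linear_combination (-(2 * qnome4 * Complex.sin ((Real.pi:ℂ) * z) * P)) * key
end

section
/- Define 𝒩u(z) := (u₂(-z̄), u₁(-z̄)). If U satisfies conj(U(z̄)) = -U(-z), then 𝒩(D(α)+k)𝒩 = -(D(ᾱ) - k̄)* for all k, α ∈ ℂ, where the formal adjoint is as for the previous operators. Moreover 𝒩² = I. -/
open Complex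

/-- 2D_{z̄} = (2/i)∂_{z̄} = (1/i)(∂_x + i∂_y) -/
noncomputable def twoDbar (f : ℂ → ℂ) : ℂ → ℂ :=
  fun z => Complex.I⁻¹ * (fderiv ℝ f z 1 + Complex.I * fderiv ℝ f z Complex.I)

/-- 2D_z = (2/i)∂_z = (1/i)(∂_x - i∂_y) -/
noncomputable def twoDz (f : ℂ → ℂ) : ℂ → ℂ :=
  fun z => Complex.I⁻¹ * (fderiv ℝ f z 1 - Complex.I * fderiv ℝ f z Complex.I)

/-- D(α) = [[2D_{z̄}, αU(z)],[αU(-z), 2D_{z̄}]] acting on functions ℂ → ℂ². -/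
noncomputable def Dop (α : ℂ) (U : ℂ → ℂ) (u : ℂ → ℂ × ℂ) : ℂ → ℂ × ℂ :=
  fun z => (twoDbar (fun w => (u w).1) z + α * U z * (u z).2,
            α * U (-z) * (u z).1 + twoDbar (fun w => (u w).2) z)

/-- The formal adjoint D(α)* = [[2D_z, conj(αU(-z))],[conj(αU(z)), 2D_z]]. -/
noncomputable def DopStar (α : ℂ) (U : ℂ → ℂ) (u : ℂ → ℂ × ℂ) : ℂ → ℂ × ℂ :=
  fun z => (twoDz (fun w => (u w).1) z + (starRingEnd ℂ) (α * U (-z)) * (u z).2,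
            (starRingEnd ℂ) (α * U z) * (u z).1 + twoDz (fun w => (u w).2) z)

/-- 𝒩 u(z) := (u₂(-z̄), u₁(-z̄)). -/
noncomputable def Nop (u : ℂ → ℂ × ℂ) : ℂ → ℂ × ℂ :=
  fun z => ((u (-(starRingEnd ℂ) z)).2, (u (-(starRingEnd ℂ) z)).1)


noncomputable def negConj : ℂ →L[ℝ] ℂ := -(Complex.conjCLE.toContinuousLinearMap)

lemma negConj_apply (w : ℂ) : negConj w = -(starRingEnd ℂ) w := rfl

lemma twoDbar_comp (f : ℂ → ℂ) (z : ℂ)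
    (hf : DifferentiableAt ℝ f (-(starRingEnd ℂ) z)) :
    twoDbar (fun w => f (-(starRingEnd ℂ) w)) z = - twoDz f (-(starRingEnd ℂ) z) := by
  have h1 : fderiv ℝ (fun w => f (negConj w)) z = (fderiv ℝ f (negConj z)).comp negConj := by
    rw [show (fun w => f (negConj w)) = f ∘ negConj from rfl,
      fderiv_comp z (by simpa [negConj_apply] using hf) negConj.differentiableAt,
      negConj.fderiv]
  have e : (fun w => f (-(starRingEnd ℂ) w)) = fun w => f (negConj w) := rfl
  have hn1 : negConj 1 = -1 := by simp [negConj_apply]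
  have hnI : negConj Complex.I = Complex.I := by simp [negConj_apply]
  simp only [twoDbar, twoDz, e, h1, ContinuousLinearMap.comp_apply, hn1, hnI,
    negConj_apply, map_neg]
  ring

/-- If conj(U(z̄)) = -U(-z) then 𝒩(D(α)+k)𝒩 = -(D(ᾱ)-k̄)* = -(D(ᾱ)* - k), and 𝒩² = I. -/
theorem Nop_conjugation (α k : ℂ) (U : ℂ → ℂ) (hU : ContDiff ℝ (⊤ : ℕ∞) U)
    (hUsym : ∀ z : ℂ, (starRingEnd ℂ) (U ((starRingEnd ℂ) z)) = -U (-z)) :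
    (∀ u : ℂ → ℂ × ℂ, ContDiff ℝ (⊤ : ℕ∞) u →
      Nop (fun w => Dop α U (Nop u) w + k • Nop u w) =
        fun z => -(DopStar ((starRingEnd ℂ) α) U u z - k • u z)) ∧
    (∀ u : ℂ → ℂ × ℂ, ∀ z : ℂ, Nop (Nop u) z = u z) := by
  constructor
  · intro u hu
    funext z
    have hd := (hu.differentiable (by simp))
    have h1 := twoDbar_comp (fun w => (u w).2) (-(starRingEnd ℂ) z) ((hd _).snd)
    have h2 := twoDbar_comp (fun w => (u w).1) (-(starRingEnd ℂ) z) ((hd _).fst)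
    simp only [map_neg, Complex.conj_conj, neg_neg] at h1 h2
    have hc1 : (starRingEnd ℂ) (U (-z)) = -U ((starRingEnd ℂ) z) := by
      have := hUsym (-(starRingEnd ℂ) z); simpa using this
    have hc2 : (starRingEnd ℂ) (U z) = -U (-(starRingEnd ℂ) z) := by
      have := hUsym ((starRingEnd ℂ) z); simpa using this
    simp only [Nop, Dop, DopStar, Prod.smul_mk, Prod.mk_add_mk, smul_eq_mul, map_neg,
      map_mul, neg_neg, Complex.conj_conj, hc1, hc2, h1, h2, Prod.ext_iff, Prod.fst_neg,
      Prod.snd_neg, Prod.fst_sub, Prod.snd_sub, Prod.smul_fst, Prod.smul_snd]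
    constructor <;> ring
  · intro u z
    simp [Nop]
end

section
/- Define the Bistritzer–MacDonald Hamiltonian H(α,λ) = [[λC, D(α)*],[D(α), λC]] on functions ℂ → ℂ⁴, and 𝒫𝒯 := [[0, 𝒬],[𝒬, 0]] where 𝒬v(z) = conj(v(-z)). If α ∈ ℝ, λ ∈ ℝ, conj(U(z̄)) = -U(-z), and V(z̄) = V(z) = conj(V(-z)), then 𝒫𝒯 H(α,λ) = H(α,λ) 𝒫𝒯. -/
open Complex

/-- C = [[0, V(z)],[V(-z), 0]] acting on functions ℂ → ℂ². -/
noncomputable def Cop (V : ℂ → ℂ) (u : ℂ → ℂ × ℂ) : ℂ → ℂ × ℂ :=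
  fun z => (V z * (u z).2, V (-z) * (u z).1)

/-- The Bistritzer–MacDonald Hamiltonian H(α,λ) = [[λC, D(α)*],[D(α), λC]],
    acting on functions ℂ → ℂ⁴ = ℂ² × ℂ². -/
noncomputable def BMH (α lam : ℂ) (U V : ℂ → ℂ) (w : ℂ → (ℂ × ℂ) × (ℂ × ℂ)) :
    ℂ → (ℂ × ℂ) × (ℂ × ℂ) :=
  fun z => (lam • Cop V (fun x => (w x).1) z + DopStar α U (fun x => (w x).2) z,
            Dop α U (fun x => (w x).1) z + lam • Cop V (fun x => (w x).2) z)

/-- 𝒬 v(z) := conj(v(-z)), componentwise. -/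
noncomputable def Qop (v : ℂ → ℂ × ℂ) : ℂ → ℂ × ℂ :=
  fun z => ((starRingEnd ℂ) ((v (-z)).1), (starRingEnd ℂ) ((v (-z)).2))

/-- 𝒫𝒯 = [[0,𝒬],[𝒬,0]]. -/
noncomputable def PTop (w : ℂ → (ℂ × ℂ) × (ℂ × ℂ)) : ℂ → (ℂ × ℂ) × (ℂ × ℂ) :=
  fun z => (Qop (fun x => (w x).2) z, Qop (fun x => (w x).1) z)


lemma fderiv_conj_neg (f : ℂ → ℂ) (hf : Differentiable ℝ f) (z v : ℂ) :
    fderiv ℝ (fun w => (starRingEnd ℂ) (f (-w))) z v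
      = -(starRingEnd ℂ) (fderiv ℝ f (-z) v) := by
  have hneg : HasFDerivAt (fun w : ℂ => -w) (-(ContinuousLinearMap.id ℝ ℂ)) z := by
    exact (hasFDerivAt_id z).neg
  have h2 := ((hf (-z)).hasFDerivAt.comp z hneg)
  have h3 := (Complex.conjCLE.toContinuousLinearMap.hasFDerivAt).comp z h2
  have := h3.fderiv
  rw [show (fun w => (starRingEnd ℂ) (f (-w)))
      = (⇑Complex.conjCLE.toContinuousLinearMap ∘ (f ∘ fun w : ℂ => -w)) from rfl, this]
  simp

lemma Q_twoDbar (f : ℂ → ℂ) (hf : Differentiable ℝ f) (z : ℂ) :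
    (starRingEnd ℂ) (twoDbar f (-z)) = twoDz (fun w => (starRingEnd ℂ) (f (-w))) z := by
  simp only [twoDbar, twoDz, fderiv_conj_neg f hf, map_add, map_mul, map_inv₀,
    Complex.conj_I]
  ring

lemma Q_twoDz (f : ℂ → ℂ) (hf : Differentiable ℝ f) (z : ℂ) :
    (starRingEnd ℂ) (twoDz f (-z)) = twoDbar (fun w => (starRingEnd ℂ) (f (-w))) z := by
  simp only [twoDbar, twoDz, fderiv_conj_neg f hf, map_add, map_sub, map_mul, map_inv₀,
    Complex.conj_I]
  ring

/-- For α, λ ∈ ℝ, conj(U(z̄)) = -U(-z), V(z̄) = V(z) = conj(V(-z)):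
    𝒫𝒯 H(α,λ) = H(α,λ) 𝒫𝒯. -/
theorem PT_symmetry (α lam : ℝ) (U V : ℂ → ℂ) (hU : ContDiff ℝ (⊤ : ℕ∞) U)
    (hUsym : ∀ z : ℂ, (starRingEnd ℂ) (U ((starRingEnd ℂ) z)) = -U (-z))
    (hV1 : ∀ z : ℂ, V ((starRingEnd ℂ) z) = V z)
    (hV2 : ∀ z : ℂ, V z = (starRingEnd ℂ) (V (-z))) :
    ∀ w : ℂ → (ℂ × ℂ) × (ℂ × ℂ), ContDiff ℝ (⊤ : ℕ∞) w →
      PTop (BMH (α : ℂ) (lam : ℂ) U V w) = BMH (α : ℂ) (lam : ℂ) U V (PTop w) := by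
  intro w hw
  have hd := hw.differentiable (by simp)
  have h11 : Differentiable ℝ (fun x => ((w x).1).1) := hd.fst.fst
  have h12 : Differentiable ℝ (fun x => ((w x).1).2) := hd.fst.snd
  have h21 : Differentiable ℝ (fun x => ((w x).2).1) := hd.snd.fst
  have h22 : Differentiable ℝ (fun x => ((w x).2).2) := hd.snd.snd
  have hVa : ∀ z : ℂ, (starRingEnd ℂ) (V (-z)) = V z := fun z => (hV2 z).symm
  have hVb : ∀ z : ℂ, (starRingEnd ℂ) (V z) = V (-z) := fun z => by
    rw [hV2 z, Complex.conj_conj]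
  funext z
  simp only [PTop, BMH, Qop, Cop, Dop, DopStar, Prod.mk_add_mk, Prod.smul_mk,
    smul_eq_mul, map_add, map_mul, Complex.conj_ofReal, neg_neg, Complex.conj_conj,
    Prod.mk.injEq]
  refine ⟨⟨?_, ?_⟩, ?_, ?_⟩
  · rw [Q_twoDbar _ h11 z, hVa]; ring
  · rw [Q_twoDbar _ h12 z, hVb]; ring
  · rw [Q_twoDz _ h21 z, hVa]; ring
  · rw [Q_twoDz _ h22 z, hVb]; ring
end

section
/- Define 𝒮 := diag(ℋ, ℋ) with ℋ(u₁,u₂)(z) = (-iu₂(-z), iu₁(-z)). Under the assumptions conj(U(z̄)) = -U(-z) and V(z̄) = V(z) = conj(V(-z)), the Hamiltonian H(α,λ) = [[λC, D(α)*],[D(α), λC]] satisfies 𝒮 H(α,λ) = -H(α,λ) 𝒮 for all α ∈ ℂ, λ ∈ ℝ (particle-hole symmetry). -/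
open Complex

/-- ℋ(u₁,u₂)(z) := (-i u₂(-z), i u₁(-z)). -/
noncomputable def Hop (u : ℂ → ℂ × ℂ) : ℂ → ℂ × ℂ :=
  fun z => (-Complex.I * (u (-z)).2, Complex.I * (u (-z)).1)

/-- 𝒮 = diag(ℋ, ℋ). -/
noncomputable def Sop (w : ℂ → (ℂ × ℂ) × (ℂ × ℂ)) : ℂ → (ℂ × ℂ) × (ℂ × ℂ) :=
  fun z => (Hop (fun x => (w x).1) z, Hop (fun x => (w x).2) z)

lemma fderiv_const_mul_neg (f : ℂ → ℂ) (hf : Differentiable ℝ f) (c : ℂ) (z v : ℂ) :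
    fderiv ℝ (fun x => c * f (-x)) z v = -(c * fderiv ℝ f (-z) v) := by
  have h1 : HasFDerivAt (fun x : ℂ => f (-x))
      (-((fderiv ℝ f (-z)))) z := by
    have := ((hf (-z)).hasFDerivAt).comp z ((hasFDerivAt_id z).neg)
    simpa [Function.comp_def] using this
  have h2 : HasFDerivAt (fun x : ℂ => c * f (-x))
      (c • (-((fderiv ℝ f (-z))))) z := h1.const_mul c
  rw [h2.fderiv]
  simp [mul_comm]

lemma twoDbar_cneg (f : ℂ → ℂ) (hf : Differentiable ℝ f) (c : ℂ) (z : ℂ) :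
    twoDbar (fun x => c * f (-x)) z = -(c * twoDbar f (-z)) := by
  simp only [twoDbar, fderiv_const_mul_neg f hf c]
  ring

lemma twoDz_cneg (f : ℂ → ℂ) (hf : Differentiable ℝ f) (c : ℂ) (z : ℂ) :
    twoDz (fun x => c * f (-x)) z = -(c * twoDz f (-z)) := by
  simp only [twoDz, fderiv_const_mul_neg f hf c]
  ring

/-- Particle-hole symmetry: 𝒮 H(α,λ) = -H(α,λ) 𝒮, for all α ∈ ℂ, λ ∈ ℝ. -/
theorem particle_hole_symmetry (α : ℂ) (lam : ℝ) (U V : ℂ → ℂ) (hU : ContDiff ℝ (⊤ : ℕ∞) U)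
    (hUsym : ∀ z : ℂ, (starRingEnd ℂ) (U ((starRingEnd ℂ) z)) = -U (-z))
    (hV1 : ∀ z : ℂ, V ((starRingEnd ℂ) z) = V z)
    (hV2 : ∀ z : ℂ, V z = (starRingEnd ℂ) (V (-z))) :
    ∀ w : ℂ → (ℂ × ℂ) × (ℂ × ℂ), ContDiff ℝ (⊤ : ℕ∞) w →
      Sop (BMH α (lam : ℂ) U V w) = fun z => -BMH α (lam : ℂ) U V (Sop w) z := by
  intro w hw
  have hd := hw.differentiable (by simp)
  have h11 : Differentiable ℝ fun x => ((w x).1).1 := hd.fst.fst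
  have h12 : Differentiable ℝ fun x => ((w x).1).2 := hd.fst.snd
  have h21 : Differentiable ℝ fun x => ((w x).2).1 := hd.snd.fst
  have h22 : Differentiable ℝ fun x => ((w x).2).2 := hd.snd.snd
  funext z
  simp only [Sop, Hop, BMH, Dop, DopStar, Cop, Prod.neg_mk, Prod.mk_add_mk,
    Prod.smul_mk, smul_eq_mul, neg_add, neg_neg]
  refine Prod.ext (Prod.ext ?_ ?_) (Prod.ext ?_ ?_) <;>
    simp only [twoDbar_cneg _ h11, twoDbar_cneg _ h12, twoDbar_cneg _ h21, twoDbar_cneg _ h22,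
      twoDz_cneg _ h11, twoDz_cneg _ h12, twoDz_cneg _ h21, twoDz_cneg _ h22, neg_neg] <;>
    ring
end

section
/- Define ℳ := [[0, i𝒩],[-i𝒩, 0]] with 𝒩u(z) = (u₂(-z̄), u₁(-z̄)). Then for H(α,λ) = [[λC, D(α)*],[D(α), λC]] with U, V as in the BM model (satisfying conj(U(z̄)) = -U(-z), V(z̄)=V(z)=conj(V(-z))), one has ℳ H(α,λ) = H(ᾱ,λ) ℳ for all α ∈ ℂ, λ ∈ ℝ (mirror symmetry). -/
open Complex

noncomputable def sigmaCLM : ℂ →L[ℝ] ℂ := -(Complex.conjCLE : ℂ →L[ℝ] ℂ)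

lemma sigmaCLM_apply (z : ℂ) : sigmaCLM z = -(starRingEnd ℂ) z := rfl

lemma fderiv_comp_sigma (f : ℂ → ℂ) (hf : Differentiable ℝ f) (c z v : ℂ) :
    fderiv ℝ (fun w => c * f (-(starRingEnd ℂ) w)) z v
      = c * fderiv ℝ f (-(starRingEnd ℂ) z) (-(starRingEnd ℂ) v) := by
  have h0 : (fun w : ℂ => c * f (-(starRingEnd ℂ) w)) = fun w => c * (f ∘ sigmaCLM) w := rfl
  rw [h0, fderiv_const_mul (((hf (sigmaCLM z)).comp z sigmaCLM.differentiableAt)) c,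
    fderiv_comp z (hf _) sigmaCLM.differentiableAt, sigmaCLM.fderiv]
  simp [sigmaCLM_apply]

lemma twoDz_comp_sigma (f : ℂ → ℂ) (hf : Differentiable ℝ f) (c z : ℂ) :
    twoDz (fun w => c * f (-(starRingEnd ℂ) w)) z
      = -(c * twoDbar f (-(starRingEnd ℂ) z)) := by
  simp only [twoDz, twoDbar, fderiv_comp_sigma f hf c z]
  simp only [map_one, map_neg, Complex.conjCLE_apply, Complex.conj_I]
  ring_nf

lemma twoDbar_comp_sigma (f : ℂ → ℂ) (hf : Differentiable ℝ f) (c z : ℂ) :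
    twoDbar (fun w => c * f (-(starRingEnd ℂ) w)) z
      = -(c * twoDz f (-(starRingEnd ℂ) z)) := by
  simp only [twoDz, twoDbar, fderiv_comp_sigma f hf c z]
  simp only [map_one, map_neg, Complex.conjCLE_apply, Complex.conj_I]
  ring

/-- ℳ = [[0, i𝒩],[-i𝒩, 0]]. -/
noncomputable def Mop (w : ℂ → (ℂ × ℂ) × (ℂ × ℂ)) : ℂ → (ℂ × ℂ) × (ℂ × ℂ) :=
  fun z => (Complex.I • Nop (fun x => (w x).2) z, (-Complex.I) • Nop (fun x => (w x).1) z)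

/-- Mirror symmetry: ℳ H(α,λ) = H(ᾱ,λ) ℳ, for all α ∈ ℂ, λ ∈ ℝ. -/
theorem mirror_symmetry (α : ℂ) (lam : ℝ) (U V : ℂ → ℂ) (hU : ContDiff ℝ (⊤ : ℕ∞) U)
    (hUsym : ∀ z : ℂ, (starRingEnd ℂ) (U ((starRingEnd ℂ) z)) = -U (-z))
    (hV1 : ∀ z : ℂ, V ((starRingEnd ℂ) z) = V z)
    (hV2 : ∀ z : ℂ, V z = (starRingEnd ℂ) (V (-z))) :
    ∀ w : ℂ → (ℂ × ℂ) × (ℂ × ℂ), ContDiff ℝ (⊤ : ℕ∞) w →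
      Mop (BMH α (lam : ℂ) U V w) = BMH ((starRingEnd ℂ) α) (lam : ℂ) U V (Mop w) := by
  intro w hw
  have hw' : Differentiable ℝ w := hw.differentiable (by simp)
  have h11 : Differentiable ℝ (fun x => ((w x).1).1) := hw'.fst.fst
  have h12 : Differentiable ℝ (fun x => ((w x).1).2) := hw'.fst.snd
  have h21 : Differentiable ℝ (fun x => ((w x).2).1) := hw'.snd.fst
  have h22 : Differentiable ℝ (fun x => ((w x).2).2) := hw'.snd.snd
  funext z
  have hA : U (-(starRingEnd ℂ) z) = -(starRingEnd ℂ) (U z) := by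
    have h := congrArg (starRingEnd ℂ) (hUsym (-z))
    simp only [map_neg, Complex.conj_conj, neg_neg] at h
    simpa using h
  have hB : U ((starRingEnd ℂ) z) = -(starRingEnd ℂ) (U (-z)) := by
    have h := congrArg (starRingEnd ℂ) (hUsym z)
    simpa using h
  have hC : V (-(starRingEnd ℂ) z) = V (-z) := by
    have h := hV1 (-z); rwa [map_neg] at h
  have hD : V ((starRingEnd ℂ) z) = V z := hV1 z
  simp only [Mop, BMH, Nop, Dop, DopStar, Cop, Prod.smul_mk, smul_eq_mul, Prod.mk_add_mk,
    Prod.fst_add, Prod.snd_add, Prod.smul_fst, Prod.smul_snd, neg_neg, map_mul,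
    Complex.conj_conj, Prod.mk.injEq]
  rw [twoDz_comp_sigma (fun y => ((w y).1).1) h11, twoDz_comp_sigma (fun y => ((w y).1).2) h12,
    twoDbar_comp_sigma (fun y => ((w y).2).1) h21, twoDbar_comp_sigma (fun y => ((w y).2).2) h22,
    hA, hB, hC, hD]
  simp only [map_neg, Complex.conj_conj]
  refine ⟨⟨?_, ?_⟩, ?_, ?_⟩ <;> ring
end
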